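/- Let Δ be a simplicial complex on [n], let 𝒞 be an ordered proper vertex k-colouring of Δ, and let R = K[x_1,…,x_k,y_1,…,y_k]. Let φ be the R-linear map from the free R-module with basis {ε_σ : σ ∈ Δ} to R sending ε_σ to the uniform monomial m_σ. If the index vector poset P(Δ, 𝒞) is a meet-semilattice, then the kernel of φ is generated by the binomial syzygies s_{σ,τ} = ε_σ · ∏_{i=1}^k y_i^{e_i(τ) − e_i(σ)} − ε_τ · ∏_{i=1}^k x_i^{e_i(τ) − e_i(σ)} taken over the covering relations e(σ) < e(τ) of P(Δ, 𝒞). -/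

import Mathlib

/-!
The map `φ` is homogeneous for the fine `ℕ^{2k}`-grading, so its kernel is spanned by the
binomials `ε_σ X^u - ε_τ X^v` with `X^u m_σ = X^v m_τ`. Restricting a face to one colour class
shows that `P(Δ,𝒞)` contains every vector supported on a single coordinate of one of its elements,
hence a meet in `P(Δ,𝒞)` is the componentwise minimum `e(ρ)` of some face `ρ`. Such a binomial is
then a combination of monomial multiples of `s_{ρ,σ}` and `s_{ρ,τ}`, and each `s_{σ,τ}` with
`e(σ) ≤ e(τ)` is a combination of covering syzygies along a saturated chain from `e(σ)` to `e(τ)`.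
-/

open MvPolynomial

/-- A simplicial complex on a vertex type `V`: a collection of finite subsets (faces)
containing the empty set and closed under taking subsets. -/
structure SimpComplex (V : Type) where
  faces : Set (Finset V)
  empty_mem : ∅ ∈ faces
  down_closed : ∀ {σ τ : Finset V}, σ ∈ faces → τ ⊆ σ → τ ∈ faces

namespace SimpComplex

variable {V : Type}

/-- `A` is an independent set of `Δ`: no two distinct members lie in a common face. -/
def IsIndep (Δ : SimpComplex V) (A : Set V) : Prop :=
  ∀ u ∈ A, ∀ v ∈ A, u ≠ v → ∀ σ ∈ Δ.faces, ¬(u ∈ σ ∧ v ∈ σ)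

/-- The link of a vertex `v` in `Δ`. -/
def link [DecidableEq V] (Δ : SimpComplex V) (v : V) : Set (Finset V) :=
  {τ | τ ∈ Δ.faces ∧ v ∉ τ ∧ insert v τ ∈ Δ.faces}

end SimpComplex

/-- A family of finsets indexed by `Fin k` is a partition of the vertex set. -/
def IsPartition {V : Type} {k : ℕ} (C : Fin k → Finset V) : Prop :=
  ∀ v : V, ∃! i, v ∈ C i

/-- A proper vertex `k`-colouring of a simplicial complex: a partition into independent sets. -/
def IsProperColouring {V : Type} {k : ℕ} (Δ : SimpComplex V) (C : Fin k → Finset V) : Prop :=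
  IsPartition C ∧ ∀ i, Δ.IsIndep (C i : Set V)

/-- An ordered proper vertex `k`-colouring, given by a duplicate-free list (recording the
linear order) for each colour class; the classes partition the vertices and are independent. -/
def IsOrderedColouring {V : Type} {k : ℕ} (Δ : SimpComplex V) (C : Fin k → List V) : Prop :=
  (∀ i, (C i).Nodup) ∧ (∀ v : V, ∃! i, v ∈ C i) ∧ (∀ i, Δ.IsIndep {v | v ∈ C i})

/-- The given linear orders on the colour classes are nesting orders: within a class,
if `v` comes before `u` then `link(u) ⊆ link(v)`.  (Thus the colouring is nested and is
endowed with the nesting order.) -/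
def IsNestingOrdered {V : Type} [DecidableEq V] {k : ℕ} (Δ : SimpComplex V)
    (C : Fin k → List V) : Prop :=
  ∀ i, (C i).Pairwise (fun v u => Δ.link u ⊆ Δ.link v)

/-- The index vector of a set `σ` with respect to the ordered colouring `C`:
`eVec C σ i = j` iff the (unique) element of `σ ∩ C i` is the `j`-th element of the list
`C i` (counting from 1), and `0` if `σ ∩ C i = ∅`. -/
def eVec {V : Type} [DecidableEq V] {k : ℕ} (C : Fin k → List V) (σ : Finset V)
    (i : Fin k) : ℕ :=
  if (C i).any (fun v => decide (v ∈ σ)) then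
    (C i).findIdx (fun v => decide (v ∈ σ)) + 1
  else 0

/-- The uniform monomial of a face `σ`:  `∏ i, x_i ^ (#C_i - e_i(σ)) * y_i ^ (e_i(σ))`,
where `x_i = X (Sum.inl i)` and `y_i = X (Sum.inr i)`. -/
noncomputable def uniformMonomial (K : Type) [Field K] {V : Type} [DecidableEq V] {k : ℕ}
    (C : Fin k → List V) (σ : Finset V) : MvPolynomial (Fin k ⊕ Fin k) K :=
  ∏ i : Fin k, (X (Sum.inl i) ^ ((C i).length - eVec C σ i) * X (Sum.inr i) ^ eVec C σ i)

/-- The uniform face ideal of `Δ` with respect to the ordered colouring `C`. -/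
noncomputable def uniformFaceIdeal (K : Type) [Field K] {V : Type} [DecidableEq V] {k : ℕ}
    (Δ : SimpComplex V) (C : Fin k → List V) : Ideal (MvPolynomial (Fin k ⊕ Fin k) K) :=
  Ideal.span {m | ∃ σ ∈ Δ.faces, m = uniformMonomial K C σ}

/-- The index vector poset `P(Δ,𝒞)` of a complex with respect to an ordered colouring:
the set of index vectors of faces, as a subset of `ℕ^k` with the componentwise order. -/
def indexSet {V : Type} [DecidableEq V] {k : ℕ} (Δ : SimpComplex V)
    (C : Fin k → List V) : Set (Fin k → ℕ) :=
  {e | ∃ σ ∈ Δ.faces, e = fun i => eVec C σ i}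

/-- A subset of `ℕ^k` is an order ideal for the componentwise partial order. -/
def IsOrderIdealNk {k : ℕ} (S : Set (Fin k → ℕ)) : Prop :=
  ∀ b ∈ S, ∀ a : Fin k → ℕ, a ≤ b → a ∈ S

/-- `a` is covered by `b` in the subposet `P ⊆ ℕ^k`: `a < b` and no element of `P` lies
strictly between them. -/
def CoversIn {k : ℕ} (P : Set (Fin k → ℕ)) (a b : Fin k → ℕ) : Prop :=
  a ∈ P ∧ b ∈ P ∧ a < b ∧ ¬ ∃ c ∈ P, a < c ∧ c < b

/-- `P ⊆ ℕ^k` is a meet-semilattice: every pair of its elements has a greatest lower bound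
within `P`. -/
def IsMeetSemilatticeIn {k : ℕ} (P : Set (Fin k → ℕ)) : Prop :=
  ∀ a ∈ P, ∀ b ∈ P, ∃ m ∈ P, m ≤ a ∧ m ≤ b ∧ ∀ d ∈ P, d ≤ a → d ≤ b → d ≤ m

open Finsupp

theorem List.findIdx_congr_of_mem {α : Type*} {l : List α} {p q : α → Bool}
    (h : ∀ x ∈ l, p x = q x) : l.findIdx p = l.findIdx q := by
  simpa [List.findIdx_map] using congrArg (List.findIdx id) (List.map_congr_left h)

theorem List.any_congr_of_mem {α : Type*} {l : List α} {p q : α → Bool}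
    (h : ∀ x ∈ l, p x = q x) : l.any p = l.any q := by
  simpa [List.any_map] using congrArg (List.any · id) (List.map_congr_left h)

section eVec

variable {V : Type} [DecidableEq V] {k : ℕ} (C : Fin k → List V)

theorem eVec_le_length (σ : Finset V) (i : Fin k) : eVec C σ i ≤ (C i).length := by
  unfold eVec
  split_ifs with h
  · exact List.findIdx_lt_length_of_exists (by simpa using h)
  · exact Nat.zero_le _

theorem eVec_congr {σ τ : Finset V} {i : Fin k} (h : ∀ v ∈ C i, v ∈ σ ↔ v ∈ τ) :
    eVec C σ i = eVec C τ i := by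
  have h' : ∀ v ∈ C i, decide (v ∈ σ) = decide (v ∈ τ) := fun v hv =>
    decide_eq_decide.2 (h v hv)
  simp only [eVec, List.any_congr_of_mem h', List.findIdx_congr_of_mem h']

theorem eVec_empty (i : Fin k) : eVec C ∅ i = 0 := by
  simp [eVec]

theorem eVec_ne_zero {σ : Finset V} {i : Fin k} {v : V} (hv : v ∈ C i) (hvσ : v ∈ σ) :
    eVec C σ i ≠ 0 := by
  have : (C i).any (fun v => decide (v ∈ σ)) :=
    List.any_eq_true.2 ⟨v, hv, by simpa using hvσ⟩
  simp [eVec, this]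

theorem getElem_mem_of_eVec_eq_succ {σ : Finset V} {i : Fin k} {j : ℕ}
    (h : eVec C σ i = j + 1) : ∃ hj : j < (C i).length, (C i)[j] ∈ σ := by
  unfold eVec at h
  split_ifs at h with hany
  · obtain rfl : (C i).findIdx (fun v => decide (v ∈ σ)) = j := by omega
    have hlt := List.findIdx_lt_length_of_exists (p := fun v => decide (v ∈ σ))
      (by simpa using hany)
    exact ⟨hlt, by simpa using List.findIdx_getElem (w := hlt)⟩

end eVec

section Colouring

variable {V : Type} [DecidableEq V] {k : ℕ} {Δ : SimpComplex V} {C : Fin k → List V}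

theorem subset_of_eVec_eq (hC : IsOrderedColouring Δ C) {σ τ : Finset V} (hσ : σ ∈ Δ.faces)
    (h : eVec C σ = eVec C τ) : σ ⊆ τ := by
  intro v hvσ
  obtain ⟨i, hvi, -⟩ := hC.2.1 v
  obtain ⟨j, hj⟩ := Nat.exists_eq_succ_of_ne_zero (eVec_ne_zero C hvi hvσ)
  obtain ⟨hjlen, hjσ⟩ := getElem_mem_of_eVec_eq_succ C hj
  obtain ⟨_, hjτ⟩ := getElem_mem_of_eVec_eq_succ C (congrFun h i ▸ hj)
  -- a face meets each colour class in at most one vertex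
  have hjv : (C i)[j] = v := by
    by_contra hne
    exact hC.2.2 i _ (List.getElem_mem hjlen) v hvi hne σ hσ ⟨hjσ, hvσ⟩
  rwa [hjv] at hjτ

theorem eVec_injOn_faces (hC : IsOrderedColouring Δ C) {σ τ : Finset V} (hσ : σ ∈ Δ.faces)
    (hτ : τ ∈ Δ.faces) (h : eVec C σ = eVec C τ) : σ = τ :=
  (subset_of_eVec_eq hC hσ h).antisymm (subset_of_eVec_eq hC hτ h.symm)

theorem eVec_filter_mem (hpart : ∀ v : V, ∃! i, v ∈ C i) (σ : Finset V) (i : Fin k) :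
    eVec C (σ.filter (· ∈ C i)) = Pi.single i (eVec C σ i) := by
  funext i'
  rw [Pi.single_apply]
  split_ifs with hi
  · subst hi
    exact eVec_congr C fun v hv => by simp [hv]
  · rw [eVec_congr C (τ := ∅), eVec_empty]
    intro v hv
    have hvi : v ∉ C i := fun hvi => hi ((hpart v).unique hv hvi)
    simp [hvi]

theorem pi_single_mem_indexSet (hpart : ∀ v : V, ∃! i, v ∈ C i) :
    ∀ e ∈ indexSet Δ C, ∀ i, Pi.single i (e i) ∈ indexSet Δ C := by
  rintro _ ⟨σ, hσ, rfl⟩ i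
  exact ⟨_, Δ.down_closed hσ (Finset.filter_subset _ σ), (eVec_filter_mem hpart σ i).symm⟩

end Colouring

theorem inf_mem_of_isMeetSemilatticeIn {k : ℕ} {P : Set (Fin k → ℕ)}
    (hP : ∀ e ∈ P, ∀ i, Pi.single i (e i) ∈ P) (hmeet : IsMeetSemilatticeIn P)
    {a b : Fin k → ℕ} (ha : a ∈ P) (hb : b ∈ P) : a ⊓ b ∈ P := by
  obtain ⟨m, hm, hma, hmb, hglb⟩ := hmeet a ha b hb
  suffices a ⊓ b ≤ m from le_antisymm (le_inf hma hmb) this ▸ hm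
  intro i
  have single_le {e : Fin k → ℕ} (he : (a ⊓ b) i ≤ e i) : Pi.single i ((a ⊓ b) i) ≤ e := by
    intro j
    rcases eq_or_ne j i with rfl | hj
    · simpa using he
    · simp [hj]
  have hsingle : Pi.single i ((a ⊓ b) i) ∈ P := by
    rcases le_total (a i) (b i) with h | h
    · simpa [inf_eq_left.2 h] using hP a ha i
    · simpa [inf_eq_right.2 h] using hP b hb i
  simpa using hglb _ hsingle (single_le inf_le_left) (single_le inf_le_right) i

theorem rel_of_le_of_covBy {α : Type*} [PartialOrder α] [LocallyFiniteOrder α]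
    {r : α → α → Prop} (refl : ∀ a, r a a) (cov : ∀ a b, a ⋖ b → r a b)
    (trans : ∀ a b c, a ≤ b → b ≤ c → r a b → r b c → r a c) {a b : α} (hab : a ≤ b) :
    r a b := by
  suffices a ≤ b ∧ r a b from this.2
  have hchain := le_iff_reflTransGen_covBy.mp hab
  clear hab
  induction hchain with
  | refl => exact ⟨le_rfl, refl a⟩
  | tail _ hbc ih => exact ⟨ih.1.trans hbc.le, trans _ _ _ ih.1 hbc.le ih.2 (cov _ _ hbc)⟩

namespace MonomialSyzygy

variable {ι σ : Type*} (R : Type*) [CommRing R]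

noncomputable def binomial (i j : ι) (u v : σ →₀ ℕ) : ι →₀ MvPolynomial σ R :=
  single i (monomial u 1) - single j (monomial v 1)

def balancedBinomials (d : ι → σ →₀ ℕ) : Set (ι →₀ MvPolynomial σ R) :=
  {b | ∃ i j u v, u + d i = v + d j ∧ b = binomial R i j u v}

variable {R}

@[simp]
theorem binomial_self (i : ι) (u : σ →₀ ℕ) : binomial R i i u u = 0 :=
  sub_self _

theorem monomial_smul_binomial (s : σ →₀ ℕ) (i j : ι) (u v : σ →₀ ℕ) :
    monomial s (1 : R) • binomial R i j u v = binomial R i j (s + u) (s + v) := by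
  simp [binomial, smul_sub, monomial_mul]

theorem binomial_add_binomial (i j l : ι) (u v w : σ →₀ ℕ) :
    binomial R i j u v + binomial R j l v w = binomial R i l u w :=
  sub_add_sub_cancel _ _ _

theorem binomial_mem_of_common_lower
    {M : Submodule (MvPolynomial σ R) (ι →₀ MvPolynomial σ R)} {d : ι → σ →₀ ℕ} {ρ i j : ι}
    {a c a' c' u v : σ →₀ ℕ}
    (hi : a + d ρ = c + d i) (hj : a' + d ρ = c' + d j)
    (hgi : binomial R ρ i a c ∈ M) (hgj : binomial R ρ j a' c' ∈ M)
    (huv : u + d i = v + d j) (hcu : c ≤ u) (hcv : c' ≤ v) :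
    binomial R i j u v ∈ M := by
  have hw : u - c + a = v - c' + a' := add_right_cancel (b := d ρ) <| by
    rw [add_assoc, hi, add_assoc, hj, ← add_assoc, ← add_assoc, tsub_add_cancel_of_le hcu,
      tsub_add_cancel_of_le hcv, huv]
  have hdecomp : binomial R i j u v =
      monomial (v - c') (1 : R) • binomial R ρ j a' c' -
        monomial (u - c) (1 : R) • binomial R ρ i a c := by
    rw [monomial_smul_binomial, monomial_smul_binomial, tsub_add_cancel_of_le hcu,
      tsub_add_cancel_of_le hcv, hw, binomial, binomial, binomial, sub_sub_sub_cancel_left]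
  rw [hdecomp]
  exact M.sub_mem (M.smul_mem _ hgj) (M.smul_mem _ hgi)

theorem ker_linearCombination_monomial (d : ι → σ →₀ ℕ) :
    LinearMap.ker (linearCombination (MvPolynomial σ R) fun i => monomial (d i) (1 : R)) =
      Submodule.span (MvPolynomial σ R) (balancedBinomials R d) := by
  classical
  set M := Submodule.span (MvPolynomial σ R) (balancedBinomials R d)
  refine le_antisymm (fun z hz => ?_) (Submodule.span_le.2 ?_)
  · -- `θ` sends `X^α` to the class of `ε_j X^(α - d j)` for a chosen `j` with `d j ≤ α`;
    -- modulo `M` this class does not depend on `j`, so `θ ∘ φ` is the quotient map.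
    let θ : MvPolynomial σ R →+ (ι →₀ MvPolynomial σ R) ⧸ M :=
      (liftAddHom fun α => if h : ∃ j, d j ≤ α then
          (M.mkQ.toAddMonoidHom.comp <| (singleAddHom h.choose).comp
            (monomial (α - d h.choose)).toAddMonoidHom) else 0).comp
        AddMonoidAlgebra.coeffAddEquiv.toAddMonoidHom
    have θ_monomial (i : ι) (u : σ →₀ ℕ) (c : R) :
        θ (monomial (u + d i) c) = M.mkQ (single i (monomial u c)) := by
      have h : ∃ j, d j ≤ u + d i := ⟨i, le_add_self⟩
      have hbal : u + d i - d h.choose + d h.choose = u + d i :=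
        tsub_add_cancel_of_le h.choose_spec
      simp only [θ, AddMonoidHom.comp_apply, AddEquiv.coe_toAddMonoidHom,
        AddMonoidAlgebra.coeffAddEquiv_apply, liftAddHom_apply, dif_pos h,
        LinearMap.toAddMonoidHom_coe, monomial_zero, singleAddHom_apply,
        single_zero, Submodule.mkQ_apply, Submodule.Quotient.mk_zero, sum_monomial_eq]
      refine (Submodule.Quotient.eq M).2 ?_
      have := M.smul_mem (C c) (Submodule.subset_span ⟨_, _, _, _, hbal, rfl⟩ :
        binomial R h.choose i (u + d i - d h.choose) u ∈ M)
      simpa [binomial, smul_sub, C_mul_monomial] using this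
    have θ_comp (z : ι →₀ MvPolynomial σ R) :
        θ (linearCombination (MvPolynomial σ R) (fun i => monomial (d i) (1 : R)) z) =
          M.mkQ z := by
      induction z using Finsupp.induction_linear with
      | zero => simp
      | add f g hf hg => simp only [map_add, hf, hg]
      | single i p =>
        induction p using MvPolynomial.induction_on' with
        | monomial u c => simpa [monomial_mul] using θ_monomial i u c
        | add p q hp hq => simp_all [single_add]
    rw [LinearMap.mem_ker] at hz
    have := θ_comp z
    rw [hz, map_zero] at this
    exact (Submodule.Quotient.mk_eq_zero M).1 this.symm
  · rintro _ ⟨i, j, u, v, huv, rfl⟩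
    simp [binomial, monomial_mul, huv]

end MonomialSyzygy

section Exponents

variable {ι : Type*} [Fintype ι]

noncomputable def xyExp (a b : ι → ℕ) : ι ⊕ ι →₀ ℕ :=
  equivFunOnFinite.symm (Sum.elim a b)

@[simp]
theorem xyExp_inl (a b : ι → ℕ) (i : ι) : xyExp a b (Sum.inl i) = a i := rfl

@[simp]
theorem xyExp_inr (a b : ι → ℕ) (i : ι) : xyExp a b (Sum.inr i) = b i := rfl

theorem xyExp_add (a b a' b' : ι → ℕ) :
    xyExp a b + xyExp a' b' = xyExp (a + a') (b + b') := by
  ext (i | i) <;> simp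

theorem xyExp_inj {a b a' b' : ι → ℕ} : xyExp a b = xyExp a' b' ↔ a = a' ∧ b = b' := by
  simp [xyExp, Sum.elim_eq_iff]

theorem xyExp_le_iff {a b : ι → ℕ} {u : ι ⊕ ι →₀ ℕ} :
    xyExp a b ≤ u ↔ (∀ i, a i ≤ u (Sum.inl i)) ∧ ∀ i, b i ≤ u (Sum.inr i) := by
  simp [Finsupp.le_def, Sum.forall]

variable {R : Type*} [CommRing R]

theorem prod_X_pow_mul_X_pow (a b : ι → ℕ) :
    ∏ i, (X (Sum.inl i) : MvPolynomial (ι ⊕ ι) R) ^ a i * X (Sum.inr i) ^ b i =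
      monomial (xyExp a b) 1 := by
  classical
  rw [monomial_eq, C_1, one_mul, Finsupp.prod_fintype _ _ (fun _ => pow_zero _),
    Fintype.prod_sum_type, Finset.prod_mul_distrib]
  rfl

theorem prod_X_inl_pow (a : ι → ℕ) :
    ∏ i, (X (Sum.inl i) : MvPolynomial (ι ⊕ ι) R) ^ a i = monomial (xyExp a 0) 1 := by
  simpa using prod_X_pow_mul_X_pow (R := R) a 0

theorem prod_X_inr_pow (b : ι → ℕ) :
    ∏ i, (X (Sum.inr i) : MvPolynomial (ι ⊕ ι) R) ^ b i = monomial (xyExp 0 b) 1 := by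
  simpa using prod_X_pow_mul_X_pow (R := R) 0 b

end Exponents

section IndexVectorPoset

open MonomialSyzygy

variable {V : Type} [DecidableEq V] {k : ℕ}

noncomputable def faceExp (C : Fin k → List V) (σ : Finset V) : Fin k ⊕ Fin k →₀ ℕ :=
  xyExp (fun i => (C i).length - eVec C σ i) (eVec C σ)

theorem uniformMonomial_eq_monomial (K : Type) [Field K] (C : Fin k → List V)
    (σ : Finset V) : uniformMonomial K C σ = monomial (faceExp C σ) 1 :=
  prod_X_pow_mul_X_pow _ _

theorem faceExp_balanced {C : Fin k → List V} {σ τ : Finset V} (h : eVec C σ ≤ eVec C τ) :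
    xyExp 0 (eVec C τ - eVec C σ) + faceExp C σ =
      xyExp (eVec C τ - eVec C σ) 0 + faceExp C τ := by
  rw [faceExp, faceExp, xyExp_add, xyExp_add, xyExp_inj]
  constructor <;> funext i <;> have : eVec C σ i ≤ eVec C τ i := h i <;>
    have := eVec_le_length C τ i <;> simp <;> omega

variable (K : Type) [CommRing K] {Δ : SimpComplex V} (C : Fin k → List V)

noncomputable def faceSyzygy (σ τ : Δ.faces) : Δ.faces →₀ MvPolynomial (Fin k ⊕ Fin k) K :=
  binomial K σ τ (xyExp 0 (eVec C τ - eVec C σ)) (xyExp (eVec C τ - eVec C σ) 0)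

def coveringSyzygies : Set (Δ.faces →₀ MvPolynomial (Fin k ⊕ Fin k) K) :=
  {s | ∃ σ τ : Δ.faces,
    CoversIn (indexSet Δ C) (eVec C σ) (eVec C τ) ∧ s = faceSyzygy K C σ τ}

variable {K C}

theorem faceSyzygy_eq_add {σ μ τ : Δ.faces} (hσμ : eVec C σ ≤ eVec C μ)
    (hμτ : eVec C μ ≤ eVec C τ) :
    faceSyzygy K C σ τ =
      monomial (xyExp 0 (eVec C τ - eVec C μ)) (1 : K) • faceSyzygy K C σ μ +
        monomial (xyExp (eVec C μ - eVec C σ) 0) (1 : K) • faceSyzygy K C μ τ := by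
  rw [faceSyzygy, faceSyzygy, faceSyzygy, monomial_smul_binomial, monomial_smul_binomial,
    add_comm (xyExp 0 _) (xyExp _ 0), binomial_add_binomial, xyExp_add, xyExp_add]
  congr 2 <;> funext i <;> have : eVec C σ i ≤ eVec C μ i := hσμ i <;>
    have : eVec C μ i ≤ eVec C τ i := hμτ i <;> simp <;> omega

theorem faceSyzygy_mem_span_of_le (hC : IsOrderedColouring Δ C) {σ τ : Δ.faces}
    (h : eVec C σ ≤ eVec C τ) :
    faceSyzygy K C σ τ ∈
      Submodule.span (MvPolynomial (Fin k ⊕ Fin k) K) (coveringSyzygies K C) := by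
  classical
  let r (p q : indexSet Δ C) : Prop := ∀ σ τ : Δ.faces, eVec C σ = p → eVec C τ = q →
    faceSyzygy K C σ τ ∈ Submodule.span (MvPolynomial (Fin k ⊕ Fin k) K) (coveringSyzygies K C)
  refine rel_of_le_of_covBy (r := r) ?_ ?_ ?_ (a := ⟨_, σ, σ.2, rfl⟩) (b := ⟨_, τ, τ.2, rfl⟩)
    h σ τ rfl rfl
  · rintro ⟨p, hp⟩ σ τ rfl hτ
    obtain rfl : σ = τ := Subtype.ext (eVec_injOn_faces hC σ.2 τ.2 hτ.symm)
    simp [faceSyzygy]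
  · rintro ⟨p, hp⟩ ⟨q, hq⟩ hpq σ τ rfl rfl
    refine Submodule.subset_span ⟨σ, τ, ⟨hp, hq, hpq.lt, ?_⟩, rfl⟩
    rintro ⟨c, hc, hpc, hcq⟩
    exact hpq.2 (c := ⟨c, hc⟩) hpc hcq
  · rintro ⟨p, hp⟩ ⟨_, μ, hμ, rfl⟩ ⟨q, hq⟩ hpm hmq hrpm hrmq σ τ rfl rfl
    rw [faceSyzygy_eq_add (μ := ⟨μ, hμ⟩) hpm hmq]
    exact add_mem (Submodule.smul_mem _ _ (hrpm _ _ rfl rfl))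
      (Submodule.smul_mem _ _ (hrmq _ _ rfl rfl))

theorem binomial_mem_span_coveringSyzygies (hC : IsOrderedColouring Δ C)
    (hmeet : IsMeetSemilatticeIn (indexSet Δ C)) {σ τ : Δ.faces} {u v : Fin k ⊕ Fin k →₀ ℕ}
    (huv : u + faceExp C σ = v + faceExp C τ) :
    binomial K σ τ u v ∈
      Submodule.span (MvPolynomial (Fin k ⊕ Fin k) K) (coveringSyzygies K C) := by
  obtain ⟨ρ, hρ, hρe⟩ := inf_mem_of_isMeetSemilatticeIn (pi_single_mem_indexSet hC.2.1)
    hmeet ⟨σ, σ.2, rfl⟩ ⟨τ, τ.2, rfl⟩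
  replace hρe : eVec C ρ = eVec C σ ⊓ eVec C τ := hρe.symm
  have hρσ : eVec C ρ ≤ eVec C σ := hρe ▸ inf_le_left
  have hρτ : eVec C ρ ≤ eVec C τ := hρe ▸ inf_le_right
  have hlower {w w' : Fin k ⊕ Fin k →₀ ℕ} {ν ν' : Δ.faces}
      (hw : w + faceExp C ν = w' + faceExp C ν')
      (hρν : eVec C ρ = eVec C ν ⊓ eVec C ν') : xyExp (eVec C ν - eVec C ρ) 0 ≤ w := by
    refine xyExp_le_iff.2 ⟨fun i => ?_, fun i => by simp⟩
    have hwi : w (Sum.inl i) + ((C i).length - eVec C ν i) =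
        w' (Sum.inl i) + ((C i).length - eVec C ν' i) := by
      simpa [faceExp] using congrArg (· (Sum.inl i)) hw
    have hρi : eVec C ρ i = min (eVec C ν i) (eVec C ν' i) := congrFun hρν i
    have := eVec_le_length C ν i
    have := eVec_le_length C ν' i
    simp only [Pi.sub_apply]
    omega
  exact binomial_mem_of_common_lower (d := fun ν : Δ.faces => faceExp C ν.1) (ρ := ⟨ρ, hρ⟩)
    (faceExp_balanced hρσ) (faceExp_balanced hρτ) (faceSyzygy_mem_span_of_le hC hρσ)
    (faceSyzygy_mem_span_of_le hC hρτ) huv (hlower huv hρe)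
    (hlower huv.symm (hρe.trans (inf_comm _ _)))

end IndexVectorPoset

/-- Corollary 6.5: let `φ` be the map from the free module with basis
`{ε_σ : σ ∈ Δ}` to `R` sending `ε_σ ↦ m_σ`.  If the index vector poset `P(Δ,𝒞)` is a
meet-semilattice, then `ker φ` is generated by the binomial syzygies
`s_{σ,τ} = ε_σ·∏ y_i^{e_i(τ)-e_i(σ)} - ε_τ·∏ x_i^{e_i(τ)-e_i(σ)}` attached to the covering
relations `e(σ) < e(τ)` of `P(Δ,𝒞)`. -/
theorem stmt12 {n k : ℕ} (K : Type) [Field K] (Δ : SimpComplex (Fin n))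
    (C : Fin k → List (Fin n)) (hC : IsOrderedColouring Δ C)
    (hmeet : IsMeetSemilatticeIn (indexSet Δ C)) :
    LinearMap.ker (Finsupp.linearCombination (MvPolynomial (Fin k ⊕ Fin k) K)
        (fun σ : ↥Δ.faces => uniformMonomial K C σ.1)) =
      Submodule.span (MvPolynomial (Fin k ⊕ Fin k) K)
        {s : ↥Δ.faces →₀ MvPolynomial (Fin k ⊕ Fin k) K |
          ∃ σ τ : ↥Δ.faces,
            CoversIn (indexSet Δ C) (fun i => eVec C σ.1 i) (fun i => eVec C τ.1 i) ∧
            s = Finsupp.single σ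
                (∏ i : Fin k, X (Sum.inr i) ^ (eVec C τ.1 i - eVec C σ.1 i))
              - Finsupp.single τ
                (∏ i : Fin k, X (Sum.inl i) ^ (eVec C τ.1 i - eVec C σ.1 i))} := by
  simp only [uniformMonomial_eq_monomial, prod_X_inl_pow, prod_X_inr_pow]
  change _ = Submodule.span _ (coveringSyzygies K C)
  rw [MonomialSyzygy.ker_linearCombination_monomial]
  refine le_antisymm (Submodule.span_le.2 ?_) (Submodule.span_le.2 ?_)
  · rintro _ ⟨σ, τ, u, v, huv, rfl⟩
    exact binomial_mem_span_coveringSyzygies hC hmeet huv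
  · rintro _ ⟨σ, τ, hcov, rfl⟩
    exact Submodule.subset_span ⟨σ, τ, _, _, faceExp_balanced hcov.2.2.1.le, rfl⟩
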